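/- arXiv:2510.19601 — 6 statements merged into one kernel-verified Lean document; each statement's English description precedes it below -/
import Mathlib

section
/- For p ≥ 3, the graph M_{2p}, consisting of two disjoint copies of K_p joined by a perfect matching, has exactly C(p,2) + 1 distinct lines. -/
open scoped Classical

namespace ChenChvatal

variable {V : Type*}

/-- `G` has diameter exactly two: some pair of distinct vertices is non-adjacent,
and any two distinct non-adjacent vertices have a common neighbor. -/
def DiamTwo (G : SimpleGraph V) : Prop :=
  (∃ x y : V, x ≠ y ∧ ¬ G.Adj x y) ∧
    ∀ x y : V, x ≠ y → ¬ G.Adj x y → ∃ z, G.Adj x z ∧ G.Adj z y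

/-- The line of a diameter-two graph defined by two vertices. -/
noncomputable def line (G : SimpleGraph V) (x y : V) : Set V :=
  if G.Adj x y then {x, y} ∪ symmDiff (G.neighborSet x) (G.neighborSet y)
  else {x, y} ∪ (G.neighborSet x ∩ G.neighborSet y)

/-- The set of all lines of a graph. -/
def lines (G : SimpleGraph V) : Set (Set V) :=
  {ℓ | ∃ x y : V, x ≠ y ∧ ℓ = line G x y}

/-- The set of non-neighbors of `x`, other than `x` itself. -/
def N2 (G : SimpleGraph V) (x : V) : Set V := {u | u ≠ x ∧ ¬ G.Adj x u}


/-- Two copies of `K_p` joined by a perfect matching. -/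
def M (p : ℕ) : SimpleGraph (Fin p ⊕ Fin p) where
  Adj u v :=
    match u, v with
    | Sum.inl i, Sum.inl j => i ≠ j
    | Sum.inr i, Sum.inr j => i ≠ j
    | Sum.inl i, Sum.inr j => i = j
    | Sum.inr i, Sum.inl j => i = j
  symm := ⟨by rintro (i | i) (j | j) h <;> exact h.symm⟩
  loopless := ⟨by rintro (i | i) h <;> exact h rfl⟩

/-- `K_{1,2,2}` minus an edge incident to the degree-four vertex `4`;
vertices `0,2` and `1,3` are the parts of size two. -/
def K122' : SimpleGraph (Fin 5) :=
  SimpleGraph.fromEdgeSet {s(0,1), s(0,3), s(2,1), s(2,3), s(2,4), s(1,4), s(3,4)}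

/-- The house graph: five-cycle `0 1 2 3 4` with the chord `{1,4}`. -/
def house : SimpleGraph (Fin 5) :=
  SimpleGraph.fromEdgeSet {s(0,1), s(1,2), s(2,3), s(3,4), s(4,0), s(1,4)}

/-- The non-neighbor ("mate") involution on `Fin q ⊕ Fin p × Fin 2`. -/
def mate (q p : ℕ) : (Fin q ⊕ Fin p × Fin 2) → (Fin q ⊕ Fin p × Fin 2)
  | Sum.inl j => Sum.inl j
  | Sum.inr (i, k) => Sum.inr (i, k + 1)

lemma mate_invol (q p : ℕ) : Function.Involutive (mate q p) := by
  rintro (j | ⟨i, k⟩)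
  · rfl
  · show Sum.inr (i, k + 1 + 1) = Sum.inr (i, k)
    have h : (1 : Fin 2) + 1 = 0 := rfl
    rw [add_assoc, h, add_zero]

/-- The complete multipartite graph with `q` parts of size one and `p` parts of size two. -/
def Kqp (q p : ℕ) : SimpleGraph (Fin q ⊕ Fin p × Fin 2) where
  Adj u v := u ≠ v ∧ v ≠ mate q p u
  symm := ⟨by
    rintro u v ⟨h1, h2⟩
    refine ⟨h1.symm, fun h => h2 ?_⟩
    rw [h]
    exact (mate_invol q p v).symm⟩
  loopless := ⟨fun u h => h.1 rfl⟩

/-!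
Call the matching edges `a_i a'_i` rungs. A rung is a line by itself containing every vertex,
since each other vertex is adjacent to exactly one of its ends. Any other pair of distinct
vertices lies on two different rungs `i`, `j`, and its line is the four ends
`{a_i, a_j, a'_i, a'_j}` of those rungs. So the lines are the whole vertex set together with one
line per pair `{i, j}`, and these `C(p,2)` lines are proper because `p ≥ 3` leaves a third rung.
-/

lemma line_comm (G : SimpleGraph V) (x y : V) : line G x y = line G y x := by
  unfold line
  rw [G.adj_comm, Set.pair_comm, symmDiff_comm, Set.inter_comm]

namespace M

variable {p : ℕ} {i j : Fin p}

@[simp] lemma adj_inl_inl : (M p).Adj (.inl i) (.inl j) ↔ i ≠ j := .rfl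
@[simp] lemma adj_inr_inr : (M p).Adj (.inr i) (.inr j) ↔ i ≠ j := .rfl
@[simp] lemma adj_inl_inr : (M p).Adj (.inl i) (.inr j) ↔ i = j := .rfl
@[simp] lemma adj_inr_inl : (M p).Adj (.inr i) (.inl j) ↔ i = j := .rfl

/-- For `e = s(i, j)`, the set `{a_i, a_j, a'_i, a'_j}`. -/
def rungs (e : Sym2 (Fin p)) : Set (Fin p ⊕ Fin p) := {v | Sum.elim (· ∈ e) (· ∈ e) v}

@[simp] lemma inl_mem_rungs {e : Sym2 (Fin p)} : .inl i ∈ rungs e ↔ i ∈ e := .rfl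
@[simp] lemma inr_mem_rungs {e : Sym2 (Fin p)} : .inr i ∈ rungs e ↔ i ∈ e := .rfl

lemma rungs_injective : Function.Injective (rungs (p := p)) := fun _ _ h =>
  Sym2.ext fun i => by rw [← inl_mem_rungs, h, inl_mem_rungs]

lemma rungs_ne_univ (hp : 3 ≤ p) (e : Sym2 (Fin p)) : rungs e ≠ Set.univ := by
  induction e using Sym2.ind with
  | _ i j =>
    obtain ⟨k, hki, hkj⟩ := Fin.exists_ne_and_ne_of_two_lt i j (by omega)
    intro h
    have hk : (.inl k : Fin p ⊕ Fin p) ∈ rungs s(i, j) := h ▸ Set.mem_univ _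
    simp [hki, hkj] at hk

lemma line_inl_inl (h : i ≠ j) : line (M p) (.inl i) (.inl j) = rungs s(i, j) := by
  rw [line, if_pos (adj_inl_inl.2 h)]
  ext (k | k) <;> simp [symmDiff_def] <;> aesop

lemma line_inr_inr (h : i ≠ j) : line (M p) (.inr i) (.inr j) = rungs s(i, j) := by
  rw [line, if_pos (adj_inr_inr.2 h)]
  ext (k | k) <;> simp [symmDiff_def] <;> aesop

lemma line_inl_inr (h : i ≠ j) : line (M p) (.inl i) (.inr j) = rungs s(i, j) := by
  rw [line, if_neg (mt adj_inl_inr.1 h)]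
  ext (k | k) <;> simp <;> aesop

lemma line_inl_inr_self (i : Fin p) : line (M p) (.inl i) (.inr i) = Set.univ := by
  rw [line, if_pos (adj_inl_inr.2 rfl)]
  ext (k | k) <;> simp [symmDiff_def] <;> tauto

lemma line_eq_univ_or_rungs {x y : Fin p ⊕ Fin p} (hxy : x ≠ y) :
    line (M p) x y = Set.univ ∨ line (M p) x y ∈ rungs '' Sym2.diagSetᶜ := by
  rcases x with i | i <;> rcases y with j | j
  · have hij : i ≠ j := fun h => hxy (congrArg _ h)
    exact .inr ⟨s(i, j), by simpa using hij, (line_inl_inl hij).symm⟩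
  · obtain rfl | hij := eq_or_ne i j
    · exact .inl (line_inl_inr_self i)
    · exact .inr ⟨s(i, j), by simpa using hij, (line_inl_inr hij).symm⟩
  · rw [line_comm]
    obtain rfl | hji := eq_or_ne j i
    · exact .inl (line_inl_inr_self j)
    · exact .inr ⟨s(j, i), by simpa using hji, (line_inl_inr hji).symm⟩
  · have hij : i ≠ j := fun h => hxy (congrArg _ h)
    exact .inr ⟨s(i, j), by simpa using hij, (line_inr_inr hij).symm⟩

lemma lines_eq (hp : 0 < p) : lines (M p) = insert Set.univ (rungs '' Sym2.diagSetᶜ) := by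
  ext ℓ
  constructor
  · rintro ⟨x, y, hxy, rfl⟩
    exact line_eq_univ_or_rungs hxy
  · rintro (rfl | ⟨e, he, rfl⟩)
    · exact ⟨.inl ⟨0, hp⟩, .inr ⟨0, hp⟩, Sum.inl_ne_inr, (line_inl_inr_self _).symm⟩
    · induction e using Sym2.ind with
      | _ i j =>
        have hij : i ≠ j := by simpa using he
        exact ⟨.inl i, .inl j, by simpa using hij, (line_inl_inl hij).symm⟩

end M

/-- For `p ≥ 3`, the graph `M_{2p}` has exactly `C(p,2) + 1` lines. -/
theorem stmt8 (p : ℕ) (hp : 3 ≤ p) :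
    (lines (M p)).ncard = p.choose 2 + 1 := by
  rw [M.lines_eq (by omega), Set.ncard_insert_of_notMem, Set.ncard_image_of_injective _
    M.rungs_injective, Sym2.ncard_diagSet_compl, Nat.card_eq_fintype_card, Fintype.card_fin]
  rintro ⟨e, -, he⟩
  exact M.rungs_ne_univ hp e he

end ChenChvatal
end

section
/- Let G be a graph of diameter two, x a vertex, and for u, v ∈ N(x) define u R v iff line(x,u) = line(x,v). Then each equivalence class [u] of R is an independent set and a module of G. -/
open scoped Classical

namespace ChenChvatal

variable {V : Type*}

/-- The class of a neighbor `u` of `x` under the relation `u R v ↔ line(x,u) = line(x,v)`. -/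
noncomputable def cls (G : SimpleGraph V) (x u : V) : Set V :=
  {v | G.Adj x v ∧ line G x v = line G x u}

lemma mem_line_adj {G : SimpleGraph V} {x v : V} (hxv : G.Adj x v) (z : V) :
    z ∈ line G x v ↔
      z = x ∨ z = v ∨ (G.Adj x z ∧ ¬ G.Adj v z) ∨ (G.Adj v z ∧ ¬ G.Adj x z) := by
  simp only [line, if_pos hxv, Set.mem_union, Set.mem_insert_iff, Set.mem_singleton_iff,
    Set.mem_symmDiff, SimpleGraph.mem_neighborSet]
  tauto

/-- Each equivalence class `[u]`, for `u ∈ N(x)`, is an independent set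
and a module of `G`. -/
theorem stmt13 (G : SimpleGraph V) (hG : DiamTwo G) (x u : V) (hu : G.Adj x u) :
    ((cls G x u).Pairwise fun a b => ¬ G.Adj a b) ∧
      ∀ z ∉ cls G x u,
        (∀ m ∈ cls G x u, G.Adj z m) ∨ (∀ m ∈ cls G x u, ¬ G.Adj z m) := by
  have key : ∀ v ∈ cls G x u, ∀ w ∈ cls G x u, ∀ z : V,
      z ∈ line G x v ↔ z ∈ line G x w := by
    intro v hv w hw z
    rw [hv.2, hw.2]
  constructor
  · intro v hv w hw hne hadj
    have h := (key v hv w hw w).mpr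
      (by rw [mem_line_adj hw.1]; exact Or.inr (Or.inl rfl))
    rw [mem_line_adj hv.1] at h
    rcases h with h | h | h | h
    · exact G.ne_of_adj hw.1 h.symm
    · exact hne h.symm
    · exact h.2 hadj
    · exact h.2 hw.1
  · intro z hz
    by_cases hzx : z = x
    · subst hzx; exact Or.inl fun m hm => hm.1
    by_cases hall : ∀ m ∈ cls G x u, ¬ G.Adj z m
    · exact Or.inr hall
    · push_neg at hall
      obtain ⟨v, hv, hzv⟩ := hall
      refine Or.inl fun w hw => ?_
      by_contra hzw
      have hzvne : z ≠ v := G.ne_of_adj hzv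
      by_cases hzadj : G.Adj x z
      · -- z ∈ line(x,w) but z ∉ line(x,v)
        have h1 : z ∈ line G x w := by
          rw [mem_line_adj hw.1]
          exact Or.inr (Or.inr (Or.inl ⟨hzadj, fun h => hzw h.symm⟩))
        have h2 := (key v hv w hw z).mpr h1
        rw [mem_line_adj hv.1] at h2
        rcases h2 with h | h | h | h
        · exact hzx h
        · exact hzvne h
        · exact h.2 hzv.symm
        · exact h.2 hzadj
      · -- z not adjacent to x: z ∈ line(x,v) but z ∉ line(x,w)
        have hzwne : z ≠ w := fun h => hzadj (h ▸ hw.1)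
        have h1 : z ∈ line G x v := by
          rw [mem_line_adj hv.1]
          exact Or.inr (Or.inr (Or.inr ⟨hzv.symm, hzadj⟩))
        have h2 := (key v hv w hw z).mp h1
        rw [mem_line_adj hw.1] at h2
        rcases h2 with h | h | h | h
        · exact hzx h
        · exact hzwne h
        · exact hzadj h.1
        · exact hzw h.1.symm

end ChenChvatal
end

section
/- Let G be a graph of diameter two with fewer lines than vertices, x a vertex with d₂(x) ≥ 2, and suppose the sets of lines L₁ = {line(x,a) : a ∈ N(x)} and L₂ = {line(x,b) : b ∈ N²(x)} are disjoint. Then |L₁| < |N(x)|, i.e., there exist distinct a, a' ∈ N(x) with line(x,a) = line(x,a'). -/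
/-!
Every vertex `v ≠ x` defines the line `line(x, v)`, and a line through `x` and a non-neighbor `b`
meets `N²(x)` only in `b`, so the `d₂(x)` lines of `L₂` are pairwise distinct. Two vertices
`b ≠ b'` of `N²(x)` define a line avoiding `x`, which lies in neither `L₁` nor `L₂`. Hence
`|L₁| + d₂(x) + 1 ≤ |L(G)| < n = 1 + |N(x)| + d₂(x)`, so `|L₁| < |N(x)|`, and the pigeonhole
principle yields two neighbors of `x` with the same line.
-/

open scoped Classical

namespace ChenChvatal

variable {V : Type*}

lemma setOf_exists_mem_eq_eq_image {α β : Type*} (f : α → β) (s : Set α) :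
    {b | ∃ a ∈ s, b = f a} = f '' s := by
  ext; simp [eq_comm]

lemma left_mem_line (G : SimpleGraph V) (x y : V) : x ∈ line G x y := by
  unfold line; split <;> exact Or.inl (Or.inl rfl)

lemma line_mem_lines (G : SimpleGraph V) {x y : V} (h : x ≠ y) : line G x y ∈ lines G :=
  ⟨x, y, h, rfl⟩

lemma line_inter_N2_eq_singleton (G : SimpleGraph V) {x b : V} (hb : b ∈ N2 G x) :
    line G x b ∩ N2 G x = {b} := by
  obtain ⟨hbx, hxb⟩ := hb
  ext u
  simp only [line, if_neg hxb, N2, Set.mem_inter_iff, Set.mem_union, Set.mem_insert_iff,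
    Set.mem_singleton_iff, SimpleGraph.mem_neighborSet, Set.mem_ofPred_eq]
  constructor
  · rintro ⟨(rfl | rfl) | ⟨hxu, -⟩, hux, hxu'⟩
    · exact absurd rfl hux
    · rfl
    · exact absurd hxu hxu'
  · rintro rfl
    exact ⟨Or.inl (Or.inr rfl), hbx, hxb⟩

lemma line_injOn_N2 (G : SimpleGraph V) (x : V) : Set.InjOn (line G x) (N2 G x) := by
  intro b hb b' hb' h
  have := line_inter_N2_eq_singleton G hb
  rwa [h, line_inter_N2_eq_singleton G hb', Set.singleton_eq_singleton_iff, eq_comm] at this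

lemma notMem_line_of_mem_N2 (G : SimpleGraph V) {x b b' : V}
    (hb : b ∈ N2 G x) (hb' : b' ∈ N2 G x) : x ∉ line G b b' := by
  obtain ⟨hbx, hxb⟩ := hb
  obtain ⟨hb'x, hxb'⟩ := hb'
  unfold line
  split
  · rintro ((rfl | rfl) | (⟨h, -⟩ | ⟨h, -⟩))
    exacts [hbx rfl, hb'x rfl, hxb h.symm, hxb' h.symm]
  · rintro ((rfl | rfl) | ⟨h, -⟩)
    exacts [hbx rfl, hb'x rfl, hxb h.symm]

lemma N2_eq_compl_insert_neighborSet (G : SimpleGraph V) (x : V) :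
    N2 G x = (insert x (G.neighborSet x))ᶜ := by
  ext u
  simp [N2, eq_comm]

lemma one_add_ncard_neighborSet_add_ncard_N2 [Finite V] (G : SimpleGraph V) (x : V) :
    1 + (G.neighborSet x).ncard + (N2 G x).ncard = Nat.card V := by
  rw [N2_eq_compl_insert_neighborSet, ← Set.ncard_add_ncard_compl (insert x (G.neighborSet x)),
    Set.ncard_insert_of_notMem G.notMem_neighborSet_self, add_comm 1]

lemma ncard_image_neighborSet_add_ncard_N2_lt_ncard_lines [Finite V] (G : SimpleGraph V)
    (x : V) (hd2 : 2 ≤ (N2 G x).ncard)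
    (hdisj : Disjoint (line G x '' G.neighborSet x) (line G x '' N2 G x)) :
    (line G x '' G.neighborSet x).ncard + (N2 G x).ncard < (lines G).ncard := by
  obtain ⟨b, b', hb, hb', hbb'⟩ := (Set.one_lt_ncard_iff (N2 G x).toFinite).mp (by omega)
  have hx : ∀ ℓ ∈ line G x '' G.neighborSet x ∪ line G x '' N2 G x, x ∈ ℓ := by
    rintro ℓ (⟨v, -, rfl⟩ | ⟨v, -, rfl⟩) <;> exact left_mem_line G x v
  have hsub : insert (line G b b') (line G x '' G.neighborSet x ∪ line G x '' N2 G x)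
      ⊆ lines G := by
    rintro ℓ (rfl | ⟨a, ha, rfl⟩ | ⟨c, hc, rfl⟩)
    · exact line_mem_lines G hbb'
    · exact line_mem_lines G (G.ne_of_adj ha)
    · exact line_mem_lines G (Ne.symm hc.1)
  calc (line G x '' G.neighborSet x).ncard + (N2 G x).ncard
      < (insert (line G b b') (line G x '' G.neighborSet x ∪ line G x '' N2 G x)).ncard := by
        rw [Set.ncard_insert_of_notMem fun h ↦ notMem_line_of_mem_N2 G hb hb' (hx _ h),
          Set.ncard_union_eq hdisj, (line_injOn_N2 G x).ncard_image]
        omega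
    _ ≤ (lines G).ncard := Set.ncard_le_ncard hsub

theorem stmt15_general [Fintype V] (G : SimpleGraph V)
    (hfew : (lines G).ncard < Fintype.card V) (x : V)
    (hd2 : 2 ≤ (N2 G x).ncard)
    (hdisj : Disjoint {ℓ : Set V | ∃ a ∈ G.neighborSet x, ℓ = line G x a}
                      {ℓ : Set V | ∃ b ∈ N2 G x, ℓ = line G x b}) :
    {ℓ : Set V | ∃ a ∈ G.neighborSet x, ℓ = line G x a}.ncard
        < (G.neighborSet x).ncard ∧
      ∃ a a' : V, a ≠ a' ∧ G.Adj x a ∧ G.Adj x a' ∧ line G x a = line G x a' := by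
  simp only [setOf_exists_mem_eq_eq_image] at hdisj ⊢
  have hlines := ncard_image_neighborSet_add_ncard_N2_lt_ncard_lines G x hd2 hdisj
  have hcard := one_add_ncard_neighborSet_add_ncard_N2 G x
  rw [Nat.card_eq_fintype_card] at hcard
  have hlt : (line G x '' G.neighborSet x).ncard < (G.neighborSet x).ncard := by omega
  obtain ⟨a, ha, a', ha', hne, heq⟩ :=
    Set.exists_ne_map_eq_of_ncard_lt_of_maps_to hlt fun a ha ↦ Set.mem_image_of_mem _ ha
  exact ⟨hlt, a, a', hne, ha, ha', heq⟩

/-- If `G` has fewer lines than vertices, `d₂(x) ≥ 2` and the families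
`L₁ = {line(x,a) : a ∈ N(x)}` and `L₂ = {line(x,b) : b ∈ N²(x)}` are disjoint,
then `|L₁| < |N(x)|`, i.e. two distinct neighbors of `x` define the same line with `x`. -/
theorem stmt15 [Fintype V] (G : SimpleGraph V) (hG : DiamTwo G)
    (hfew : (lines G).ncard < Fintype.card V) (x : V)
    (hd2 : 2 ≤ (N2 G x).ncard)
    (hdisj : Disjoint {ℓ : Set V | ∃ a ∈ G.neighborSet x, ℓ = line G x a}
                      {ℓ : Set V | ∃ b ∈ N2 G x, ℓ = line G x b}) :
    {ℓ : Set V | ∃ a ∈ G.neighborSet x, ℓ = line G x a}.ncard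
        < (G.neighborSet x).ncard ∧
      ∃ a a' : V, a ≠ a' ∧ G.Adj x a ∧ G.Adj x a' ∧ line G x a = line G x a' :=
  stmt15_general G hfew x hd2 hdisj

end ChenChvatal
end

section
/- Let G be a graph of diameter two, x ∈ V, a ∈ N(x), b ∈ N²(x) with line(x,a) = line(x,b). Then N(a) ∩ N²(x) = {b}. -/
open scoped Classical

namespace ChenChvatal

variable {V : Type*}

/-- If `a ∈ N(x)`, `b ∈ N²(x)` and `line(x,a) = line(x,b)`,
then `N(a) ∩ N²(x) = {b}`. -/
theorem stmt16 (G : SimpleGraph V) (hG : DiamTwo G) (x a b : V)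
    (ha : G.Adj x a) (hb : b ∈ N2 G x) (hline : line G x a = line G x b) :
    G.neighborSet a ∩ N2 G x = {b} := by
  obtain ⟨hbx, hxb⟩ := hb
  have hxa : G.Adj x a := ha
  have hab : a ≠ b := by rintro rfl; exact hxb ha
  have hla : line G x a = {x, a} ∪ symmDiff (G.neighborSet x) (G.neighborSet a) := by
    simp [line, ha]
  have hlb : line G x b = {x, b} ∪ (G.neighborSet x ∩ G.neighborSet b) := by
    simp [line, hxb]
  -- b is adjacent to a
  have hbin : b ∈ line G x a := by
    rw [hline, hlb]; left; right; rfl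
  have hba : G.Adj a b := by
    rw [hla] at hbin
    rcases hbin with h | h
    · rcases h with h | h
      · exact absurd h hbx
      · exact absurd h.symm hab
    · rcases h with ⟨h1, _⟩ | ⟨h1, _⟩
      · exact absurd h1 hxb
      · exact h1
  ext u
  simp only [Set.mem_inter_iff, Set.mem_singleton_iff]
  constructor
  · rintro ⟨hua, hux, hxu⟩
    have hu : u ∈ line G x a := by
      rw [hla]; right; right; exact ⟨hua, hxu⟩
    rw [hline, hlb] at hu
    rcases hu with h | h
    · rcases h with h | h
      · exact absurd h hux
      · exact h
    · exact absurd h.1 hxu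
  · rintro rfl
    exact ⟨hba, hbx, hxb⟩

end ChenChvatal
end

section
/- Let G be a graph of diameter two, x ∈ V, a ∈ N(x), b ∈ N²(x) with line(x,a) = line(x,b), and suppose N²(x) ∩ N²(b) = ∅. Then the line through a and b is the entire vertex set V. -/
open scoped Classical

namespace ChenChvatal

variable {V : Type*}

/-- If `a ∈ N(x)`, `b ∈ N²(x)`, `line(x,a) = line(x,b)` and `N²(x) ∩ N²(b) = ∅`,
then the line through `a` and `b` is universal. -/
theorem stmt17 (G : SimpleGraph V) (hG : DiamTwo G) (x a b : V)
    (ha : G.Adj x a) (hb : b ∈ N2 G x) (hline : line G x a = line G x b)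
    (hN2 : N2 G x ∩ N2 G b = ∅) :
    line G a b = Set.univ := by
  obtain ⟨hbx, hxb⟩ := hb
  have hline' : ∀ v : V, (v = x ∨ v = a ∨ ((G.Adj x v ∧ ¬G.Adj a v) ∨ (G.Adj a v ∧ ¬G.Adj x v))) ↔
      (v = x ∨ v = b ∨ (G.Adj x v ∧ G.Adj b v)) := by
    intro v
    have h := Set.ext_iff.mp hline v
    simp only [line, if_pos ha, if_neg hxb, Set.mem_union, Set.mem_insert_iff,
      Set.mem_singleton_iff, Set.mem_symmDiff, Set.mem_inter_iff,
      SimpleGraph.mem_neighborSet] at h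
    tauto
  have hN2' : ∀ v : V, v ≠ x → ¬G.Adj x v → v = b ∨ G.Adj b v := by
    intro v hvx hv
    by_contra h
    push_neg at h
    exact Set.eq_empty_iff_forall_notMem.mp hN2 v ⟨⟨hvx, hv⟩, h.1, h.2⟩
  have hab : G.Adj a b := by
    have h := (hline' b).mpr (Or.inr (Or.inl rfl))
    rcases h with h | h | h
    · exact absurd h hbx
    · rw [h] at hxb; exact absurd ha hxb
    · rcases h with ⟨h1, _⟩ | ⟨h1, _⟩
      · exact absurd h1 hxb
      · exact h1
  ext v
  simp only [line, if_pos hab, Set.mem_union, Set.mem_insert_iff, Set.mem_singleton_iff,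
    Set.mem_symmDiff, SimpleGraph.mem_neighborSet, Set.mem_univ, iff_true]
  by_cases hva : v = a
  · exact Or.inl (Or.inl hva)
  by_cases hvb : v = b
  · exact Or.inl (Or.inr hvb)
  right
  by_cases hvx : v = x
  · subst hvx
    exact Or.inl ⟨ha.symm, fun h => hxb h.symm⟩
  by_cases hxv : G.Adj x v
  · by_cases hbv : G.Adj b v
    · have h := (hline' v).mpr (Or.inr (Or.inr ⟨hxv, hbv⟩))
      rcases h with h | h | h
      · exact absurd h hvx
      · exact absurd h hva
      · rcases h with ⟨_, h2⟩ | ⟨_, h2⟩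
        · exact Or.inr ⟨hbv, h2⟩
        · exact absurd hxv h2
    · by_cases hav : G.Adj a v
      · exact Or.inl ⟨hav, hbv⟩
      · have h := (hline' v).mp (Or.inr (Or.inr (Or.inl ⟨hxv, hav⟩)))
        rcases h with h | h | h
        · exact absurd h hvx
        · exact absurd h hvb
        · exact absurd h.2 hbv
  · have hbv : G.Adj b v := (hN2' v hvx hxv).resolve_left hvb
    by_cases hav : G.Adj a v
    · have h := (hline' v).mp (Or.inr (Or.inr (Or.inr ⟨hav, hxv⟩)))
      rcases h with h | h | h
      · exact absurd h hvx
      · exact absurd h hvb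
      · exact absurd h.1 hxv
    · exact Or.inr ⟨hbv, hav⟩

end ChenChvatal
end

section
/- Every graph of diameter two that is isomorphic to one of K_{1,2}, K_{2,2}, K_{2,3}, K_{1,2,2}, K'_{1,2,2}, the house graph K''_{1,2,2}, M_6, K'_6, M_8, K'_8 has strictly fewer lines than vertices. -/
open scoped Classical

namespace ChenChvatal

variable {V : Type*}

/-- Membership in the family
`{K_{1,2}, K_{2,2}, K_{2,3}, K_{1,2,2}, K'_{1,2,2}, K''_{1,2,2}, M_6, K'_6, M_8, K'_8}`
up to isomorphism.  Here `Kqp q p` denotes the complete multipartite graph with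
`q` parts of size one and `p` parts of size two. -/
def InFamily (G : SimpleGraph V) : Prop :=
  Nonempty (G ≃g completeBipartiteGraph (Fin 1) (Fin 2)) ∨
  Nonempty (G ≃g completeBipartiteGraph (Fin 2) (Fin 2)) ∨
  Nonempty (G ≃g completeBipartiteGraph (Fin 2) (Fin 3)) ∨
  Nonempty (G ≃g Kqp 1 2) ∨
  Nonempty (G ≃g K122') ∨
  Nonempty (G ≃g house) ∨
  Nonempty (G ≃g M 3) ∨
  Nonempty (G ≃g Kqp 0 3) ∨
  Nonempty (G ≃g M 4) ∨
  Nonempty (G ≃g Kqp 0 4)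

/-! Lines and their number are invariant under graph isomorphism, so it suffices to count the
lines of the ten concrete graphs of the family. On those, `line` agrees with a computable
finset, and the count is evaluated by `decide`. -/

instance (p : ℕ) : DecidableRel (M p).Adj := fun u v => by
  rcases u with i | i <;> rcases v with j | j
  · exact inferInstanceAs (Decidable (i ≠ j))
  · exact inferInstanceAs (Decidable (i = j))
  · exact inferInstanceAs (Decidable (i = j))
  · exact inferInstanceAs (Decidable (i ≠ j))

instance (q p : ℕ) : DecidableRel (Kqp q p).Adj := fun u v =>
  inferInstanceAs (Decidable (u ≠ v ∧ v ≠ mate q p u))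

instance : DecidableRel K122'.Adj := fun a b =>
  decidable_of_iff (s(a, b) ∈ ({s(0,1), s(0,3), s(2,1), s(2,3), s(2,4), s(1,4), s(3,4)} :
      Finset (Sym2 (Fin 5))) ∧ a ≠ b)
    (by simp [K122', SimpleGraph.fromEdgeSet_adj])

instance : DecidableRel house.Adj := fun a b =>
  decidable_of_iff (s(a, b) ∈ ({s(0,1), s(1,2), s(2,3), s(3,4), s(4,0), s(1,4)} :
      Finset (Sym2 (Fin 5))) ∧ a ≠ b)
    (by simp [house, SimpleGraph.fromEdgeSet_adj])

instance (α β : Type*) [DecidableEq α] [DecidableEq β] :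
    DecidableRel (completeBipartiteGraph α β).Adj := fun _ _ =>
  inferInstanceAs (Decidable (_ ∨ _))

section Iso

variable {W : Type*} {G : SimpleGraph V} {H : SimpleGraph W}

theorem line_iso (e : G ≃g H) (x y : V) : line H (e x) (e y) = e '' line G x y := by
  ext z
  obtain ⟨w, rfl⟩ := e.surjective z
  rw [e.injective.mem_set_image]
  by_cases h : G.Adj x y
  · rw [line, line, if_pos h, if_pos (e.map_adj_iff.mpr h)]
    simp [Set.mem_symmDiff, e.map_adj_iff, e.injective.eq_iff]
  · rw [line, line, if_neg h, if_neg (mt e.map_adj_iff.mp h)]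
    simp [e.map_adj_iff, e.injective.eq_iff]

theorem lines_iso (e : G ≃g H) : lines H = Set.image e '' lines G := by
  ext ℓ
  constructor
  · rintro ⟨x, y, hxy, rfl⟩
    refine ⟨line G (e.symm x) (e.symm y), ⟨e.symm x, e.symm y, e.symm.injective.ne hxy, rfl⟩, ?_⟩
    rw [← line_iso, e.apply_symm_apply, e.apply_symm_apply]
  · rintro ⟨ℓ, ⟨x, y, hxy, rfl⟩, rfl⟩
    exact ⟨e x, e y, e.injective.ne hxy, (line_iso e x y).symm⟩

theorem ncard_lines_iso (e : G ≃g H) : (lines G).ncard = (lines H).ncard := by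
  rw [lines_iso e, Set.ncard_image_of_injective _ (Set.image_injective.mpr e.injective)]

end Iso

section Computable

variable [Fintype V] [DecidableEq V] (G : SimpleGraph V) [DecidableRel G.Adj]

def lineFinset (x y : V) : Finset V :=
  if G.Adj x y then {x, y} ∪ symmDiff (G.neighborFinset x) (G.neighborFinset y)
  else {x, y} ∪ (G.neighborFinset x ∩ G.neighborFinset y)

def linesFinset : Finset (Finset V) :=
  ((Finset.univ ×ˢ Finset.univ).filter fun p : V × V => p.1 ≠ p.2).image
    fun p => lineFinset G p.1 p.2

theorem coe_lineFinset (x y : V) : (lineFinset G x y : Set V) = line G x y := by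
  by_cases h : G.Adj x y <;> simp [line, lineFinset, h, Set.insert_union]

theorem lines_eq_image_linesFinset : lines G = (↑) '' (linesFinset G : Set (Finset V)) := by
  ext ℓ
  simp [lines, linesFinset, coe_lineFinset, eq_comm]

theorem ncard_lines_eq_card_linesFinset : (lines G).ncard = (linesFinset G).card := by
  rw [lines_eq_image_linesFinset, Set.ncard_image_of_injective _ Finset.coe_injective,
    Set.ncard_coe_finset]

end Computable

theorem stmt18_general [Fintype V] (G : SimpleGraph V)
    (hfam : InFamily G) :
    (lines G).ncard < Fintype.card V := by
  rcases hfam with e | e | e | e | e | e | e | e | e | e <;> obtain ⟨e⟩ := e <;>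
    rw [ncard_lines_iso e, ncard_lines_eq_card_linesFinset, Fintype.card_congr e.toEquiv] <;>
    decide

/-- Every diameter-two graph isomorphic to one of the ten graphs of the family
has strictly fewer lines than vertices. -/
theorem stmt18 [Fintype V] (G : SimpleGraph V) (hG : DiamTwo G)
    (hfam : InFamily G) :
    (lines G).ncard < Fintype.card V :=
  stmt18_general G hfam

end ChenChvatal
end
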